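/- Let k be a field of characteristic zero and let k⟨x_1,…,x_n,y⟩ be the free associative k-algebra on n+1 generators. Then for every multi-index K = (K_1,…,K_n) ∈ ℕ^n, the identity x^K · y = Σ_{0 ≤ s ≤ K} (∏_{i=1}^n C(K_i, s_i)) · [x^{K−s} y]] · x^s holds, where the sum is over multi-indices s ∈ ℕ^n with s_i ≤ K_i for all i, C(·,·) denotes binomial coefficients, and [x^m y]] denotes the complete bracket of the word consisting of m_1 copies of x_1, …, m_n copies of x_n, followed by y (so [x^0 y]] = y). -/

import Mathlib

/-!
Statement 14: an identity in the free associative algebra `k⟨x₁, …, x_n, y⟩`.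
`cbrk` is the complete bracket, `xPow K = x₁^{K₁} ⋯ x_n^{K_n}` and
`xyWord m` is the word consisting of `m₁` copies of `x₁`, …, `m_n` copies of
`x_n`, followed by `y` (so `cbrk (xyWord 0) = y`).
-/

noncomputable section

variable (k : Type*) [Field k]

/-- The complete bracket `[a₁, …, a_m]]`. -/
def cbrk {B : Type*} [Ring B] : List B → B
  | [] => 0
  | [a] => a
  | a :: b :: rest => a * cbrk (b :: rest) - cbrk (b :: rest) * a

/-- The ordered monomial `x^K = x₁^{K₁} ⋯ x_n^{K_n}`. -/
def xPow (n : ℕ) (K : Fin n → ℕ) : FreeAlgebra k (Fin n ⊕ Unit) :=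
  (List.ofFn fun i => FreeAlgebra.ι k (Sum.inl i) ^ K i).prod

/-- The word consisting of `m₁` copies of `x₁`, …, `m_n` copies of `x_n`,
followed by `y`. -/
def xyWord (n : ℕ) (m : Fin n → ℕ) : List (FreeAlgebra k (Fin n ⊕ Unit)) :=
  (List.ofFn fun i => List.replicate (m i) (FreeAlgebra.ι k (Sum.inl i))).flatten ++
    [FreeAlgebra.ι k (Sum.inr ())]


/-!
Left multiplication by `a` splits as `L_a = R_a + ad a`, and the two summands commute, so the
binomial theorem gives `a^m b = Σ_j C(m, j) (ad a)^{m-j}(b) a^j`. A complete bracket whose word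
starts with `m` copies of `a` is `(ad a)^m` of the bracket of the rest, so this is the case of
one variable. For several variables, peel off `x₁^{K₁}`: by induction `x₂^{K₂} ⋯ x_n^{K_n} y`
is a sum of terms `[x^{K'-t} y]] x^t`, and the one-variable identity applied to
`x₁^{K₁} [x^{K'-t} y]]` produces the terms of the full sum.
-/

open Finset

section Adjoint

open LieAlgebra LinearMap

attribute [local instance] LieRing.ofAssociativeRing

variable {A : Type*} [Ring A]

lemma cbrk_cons (a : A) {l : List A} (hl : l ≠ []) : cbrk (a :: l) = ⁅a, cbrk l⁆ := by
  obtain ⟨b, rest, rfl⟩ := List.exists_cons_of_ne_nil hl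
  rw [Ring.lie_def]
  rfl

lemma cbrk_replicate_append (a : A) (m : ℕ) {l : List A} (hl : l ≠ []) :
    cbrk (List.replicate m a ++ l) = (ad ℤ A a ^ m) (cbrk l) := by
  induction m with
  | zero => rfl
  | succ m ih =>
    rw [List.replicate_succ, List.cons_append, cbrk_cons a (by simp [hl]), ih, pow_succ',
      Module.End.mul_apply, ad_apply]

theorem pow_mul_eq_sum_ad_pow_mul (a b : A) (m : ℕ) :
    a ^ m * b = ∑ j ∈ range (m + 1), m.choose j • ((ad ℤ A a ^ (m - j)) b * a ^ j) := by
  have hsplit : mulLeft ℤ a = mulRight ℤ a + ad ℤ A a := by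
    rw [ad_eq_lmul_left_sub_lmul_right, Pi.sub_apply]
    abel
  have hcomm : Commute (mulRight ℤ a) (ad ℤ A a) := by
    rw [ad_eq_lmul_left_sub_lmul_right]
    exact (commute_mulLeft_right a a).symm.sub_right (Commute.refl _)
  calc a ^ m * b = (mulLeft ℤ a ^ m) b := by rw [pow_mulLeft, mulLeft_apply]
    _ = _ := by
      rw [hsplit, hcomm.add_pow, LinearMap.sum_apply]
      refine sum_congr rfl fun j _ => ?_
      rw [Module.End.mul_apply, Module.End.natCast_apply, Module.End.mul_apply, map_nsmul,
        map_nsmul, pow_mulRight, mulRight_apply]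

end Adjoint

lemma sum_Iic_fin_succ {M : Type*} [AddCommMonoid M] {n : ℕ} (K : Fin (n + 1) → ℕ)
    (F : (Fin (n + 1) → ℕ) → M) :
    ∑ s ∈ Iic K, F s = ∑ j ∈ Iic (K 0), ∑ t ∈ Iic (Fin.tail K), F (Fin.cons j t) := by
  have hIic := filter_piFinset_eq_map_consEquiv (fun i => Iic (K i)) (fun _ => True)
  simp only [filter_true] at hIic
  rw [← sum_product', show Iic K = _ from hIic, sum_map]
  rfl

section OrderedMonomial

variable {A : Type*} {n : ℕ}

def orderedPow [Monoid A] (x : Fin n → A) (K : Fin n → ℕ) : A :=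
  (List.ofFn fun i => x i ^ K i).prod

def powWord (x : Fin n → A) (m : Fin n → ℕ) : List A :=
  (List.ofFn fun i => List.replicate (m i) (x i)).flatten

lemma orderedPow_succ [Monoid A] (x : Fin (n + 1) → A) (K : Fin (n + 1) → ℕ) :
    orderedPow x K = x 0 ^ K 0 * orderedPow (Fin.tail x) (Fin.tail K) := by
  rw [orderedPow, List.ofFn_succ, List.prod_cons]
  rfl

lemma powWord_succ (x : Fin (n + 1) → A) (m : Fin (n + 1) → ℕ) :
    powWord x m = List.replicate (m 0) (x 0) ++ powWord (Fin.tail x) (Fin.tail m) := by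
  rw [powWord, List.ofFn_succ, List.flatten_cons]
  rfl

attribute [local instance] LieRing.ofAssociativeRing

theorem orderedPow_mul_eq_sum_cbrk_mul [Ring A] (x : Fin n → A) (y : A) (K : Fin n → ℕ) :
    orderedPow x K * y = ∑ s ∈ Iic K, (∏ i, (K i).choose (s i)) •
      (cbrk (powWord x (K - s) ++ [y]) * orderedPow x s) := by
  induction n with
  | zero => simp [orderedPow, powWord, cbrk, Pi.card_Iic]
  | succ n ih =>
    rw [orderedPow_succ, mul_assoc, ih, mul_sum, sum_Iic_fin_succ, sum_comm,
      ← Nat.range_succ_eq_Iic]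
    refine sum_congr rfl fun t _ => ?_
    rw [mul_smul_comm, ← mul_assoc, pow_mul_eq_sum_ad_pow_mul, sum_mul, smul_sum]
    refine sum_congr rfl fun j _ => ?_
    rw [Fin.prod_univ_succ, powWord_succ, orderedPow_succ, List.append_assoc,
      cbrk_replicate_append _ _ (by simp), smul_mul_assoc, smul_smul, mul_assoc, mul_comm]
    rfl

end OrderedMonomial

theorem statement14 (n : ℕ) (K : Fin n → ℕ) :
    xPow k n K * FreeAlgebra.ι k (Sum.inr ()) =
      ∑ s ∈ Finset.Iic K,
        (∏ i, ((K i).choose (s i) : k)) •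
          (cbrk (xyWord k n (K - s)) * xPow k n s) := by
  simp_rw [← Nat.cast_prod, Nat.cast_smul_eq_nsmul]
  exact orderedPow_mul_eq_sum_cbrk_mul _ _ K
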